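/- The period function satisfies lim_{ζ → 1/2⁻} T(ζ) = +∞. -/

import Mathlib

/-!
The product `(1/4 - p²)(μ² - (σq)²)` is a first integral, so an orbit starting in the box
`|p| < 1/2`, `|σq| < μ` never leaves it. In that box `t ↦ μt - log (1 - 2p(t))` is
nondecreasing, its derivative being `μ - σq(1/2 + p) ≥ 0`. Within one period the orbit must
reach `p ≤ 0`, where `log (1 - 2p) ≥ 0`; hence `μ T(ζ) ≥ -log (1 - 2ζ)`, which tends to `+∞`
as `ζ → 1/2⁻`.
-/

open Filter Topology

/-- (p, q) is a solution of the autonomous system (nps):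
ṗ = −(σ/4)q + σqp², q̇ = (μ²/σ)p − σpq². -/
def IsNpsSolution (μ σ : ℝ) (p q : ℝ → ℝ) : Prop :=
  ∀ t : ℝ,
    HasDerivAt p (-(σ / 4) * q t + σ * q t * (p t) ^ 2) t ∧
    HasDerivAt q ((μ ^ 2 / σ) * p t - σ * p t * (q t) ^ 2) t

/-- τ is the minimal period of the pair (p, q). -/
def IsMinimalPeriod (p q : ℝ → ℝ) (τ : ℝ) : Prop :=
  0 < τ ∧ (∀ t, p (t + τ) = p t ∧ q (t + τ) = q t) ∧
    ∀ τ' : ℝ, 0 < τ' → (∀ t, p (t + τ') = p t ∧ q (t + τ') = q t) → τ ≤ τ'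

open Set Real

lemma tendsto_neg_log_one_sub_two_mul_nhdsLT :
    Tendsto (fun x : ℝ => -log (1 - 2 * x)) (𝓝[<] (1 / 2)) atTop := by
  have hlin : Tendsto (fun x : ℝ => 1 - 2 * x) (𝓝[<] (1 / 2)) (𝓝[>] 0) := by
    refine tendsto_nhdsWithin_of_tendsto_nhds_of_eventually_within _
      (((by fun_prop : Continuous fun x : ℝ => 1 - 2 * x).tendsto' _ _ (by norm_num)).mono_left
        nhdsWithin_le_nhds) ?_
    filter_upwards [self_mem_nhdsWithin] with x (hx : x < 1 / 2)
    exact show 0 < 1 - 2 * x by linarith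
  exact tendsto_neg_atBot_atTop.comp (tendsto_log_nhdsGT_zero.comp hlin)

namespace IsNpsSolution

variable {μ σ : ℝ} {p q : ℝ → ℝ}

lemma continuous_fst (hs : IsNpsSolution μ σ p q) : Continuous p :=
  continuous_iff_continuousAt.2 fun t => (hs t).1.continuousAt

lemma energy_eq (hs : IsNpsSolution μ σ p q) (hσ : σ ≠ 0) (t : ℝ) :
    (1 / 4 - p t ^ 2) * (μ ^ 2 - (σ * q t) ^ 2) =
      (1 / 4 - p 0 ^ 2) * (μ ^ 2 - (σ * q 0) ^ 2) := by
  let E : ℝ → ℝ := fun t => (1 / 4 - p t ^ 2) * (μ ^ 2 - (σ * q t) ^ 2)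
  have hE : ∀ t, HasDerivAt E 0 t := fun t =>
    (((hasDerivAt_const t _).sub ((hs t).1.pow 2)).mul
      ((hasDerivAt_const t _).sub (((hs t).2.const_mul σ).pow 2))).congr_deriv (by
        simp only [Pi.sub_apply, Pi.pow_apply]
        field_simp
        ring)
  exact is_const_of_deriv_eq_zero (fun x => (hE x).differentiableAt) (fun x => (hE x).deriv) t 0

lemma abs_lt_of_initial_abs_lt (hs : IsNpsSolution μ σ p q) (hσ : σ ≠ 0)
    (hp0 : |p 0| < 1 / 2) (hq0 : |σ * q 0| < μ) (t : ℝ) :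
    |p t| < 1 / 2 ∧ |σ * q t| < μ := by
  have hμ : 0 ≤ μ := (abs_nonneg _).trans hq0.le
  have hA0 : 0 < 1 / 4 - p 0 ^ 2 := by
    nlinarith [sq_lt_sq' (abs_lt.1 hp0).1 (abs_lt.1 hp0).2]
  have hB0 : 0 < μ ^ 2 - (σ * q 0) ^ 2 := by
    nlinarith [sq_lt_sq' (abs_lt.1 hq0).1 (abs_lt.1 hq0).2]
  have hE : ∀ s, 0 < (1 / 4 - p s ^ 2) * (μ ^ 2 - (σ * q s) ^ 2) := fun s =>
    hs.energy_eq hσ s ▸ mul_pos hA0 hB0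
  -- `1/4 - p²` cannot change sign, since the conserved energy never vanishes.
  have hA : 0 < 1 / 4 - p t ^ 2 := by
    by_contra! hle
    obtain ⟨s, hs0⟩ : (0 : ℝ) ∈ range fun s => 1 / 4 - p s ^ 2 :=
      intermediate_value_univ t 0 (continuous_const.sub (hs.continuous_fst.pow 2)) ⟨hle, hA0.le⟩
    exact (hE s).ne' (by simp only at hs0; rw [hs0, zero_mul])
  have hB : 0 < μ ^ 2 - (σ * q t) ^ 2 := (pos_iff_pos_of_mul_pos (hE t)).1 hA
  exact ⟨abs_lt_of_sq_lt_sq (by linarith) one_half_pos.le, abs_lt_of_sq_lt_sq (by linarith) hμ⟩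

lemma monotone_mul_sub_log (hs : IsNpsSolution μ σ p q) (hp : ∀ t, |p t| < 1 / 2)
    (hq : ∀ t, |σ * q t| ≤ μ) : Monotone fun t => μ * t - log (1 - 2 * p t) := by
  have hderiv : ∀ t, HasDerivAt (fun t => μ * t - log (1 - 2 * p t))
      (μ - σ * q t * (1 / 2 + p t)) t := by
    intro t
    have hne : 1 - 2 * p t ≠ 0 := by linarith [(abs_lt.1 (hp t)).2]
    refine (((hasDerivAt_id t).const_mul μ).sub
      (((hasDerivAt_const t _).sub ((hs t).1.const_mul 2)).log hne)).congr_deriv ?_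
    simp only [Pi.sub_apply]
    rw [show 0 - 2 * (-(σ / 4) * q t + σ * q t * p t ^ 2) = σ * q t * (1 / 2 + p t) * (1 - 2 * p t)
      by ring, mul_div_cancel_right₀ _ hne, mul_one]
  refine monotone_of_deriv_nonneg (fun t => (hderiv t).differentiableAt) fun t => ?_
  rw [(hderiv t).deriv, sub_nonneg]
  obtain ⟨hp₁, hp₂⟩ := abs_lt.1 (hp t)
  calc σ * q t * (1 / 2 + p t) ≤ |σ * q t| * (1 / 2 + p t) :=
        mul_le_mul_of_nonneg_right (le_abs_self _) (by linarith)
    _ ≤ μ * 1 := mul_le_mul (hq t) (by linarith) (by linarith) ((abs_nonneg _).trans (hq t))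
    _ = μ := mul_one μ

/-- While `p > 0`, `q` strictly increases, so a periodic orbit has to reach `p ≤ 0`. -/
lemma exists_mem_Ico_nonpos (hs : IsNpsSolution μ σ p q) (hσ : 0 < σ)
    (hq : ∀ t, |σ * q t| < μ) {τ : ℝ} (hτ : 0 < τ) (hpp : Function.Periodic p τ)
    (hqp : Function.Periodic q τ) : ∃ t ∈ Ico 0 τ, p t ≤ 0 := by
  obtain ⟨t₁, ht₁⟩ : ∃ t, p t ≤ 0 := by
    by_contra! hpos
    have hmono : StrictMono q := strictMono_of_deriv_pos fun t => by
      rw [(hs t).2.deriv, show μ ^ 2 / σ * p t - σ * p t * q t ^ 2 =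
        p t / σ * (μ ^ 2 - (σ * q t) ^ 2) by field_simp]
      exact mul_pos (div_pos (hpos t) hσ)
        (by nlinarith [sq_lt_sq' (abs_lt.1 (hq t)).1 (abs_lt.1 (hq t)).2])
    exact (hmono (lt_add_of_pos_right 0 hτ)).ne (hqp 0).symm
  obtain ⟨t₀, ht₀, hpt₀⟩ := hpp.exists_mem_Ico₀ hτ t₁
  exact ⟨t₀, ht₀, hpt₀ ▸ ht₁⟩

lemma neg_log_one_sub_two_mul_le_mul_period (hs : IsNpsSolution μ σ p q) (hσ : 0 < σ)
    (hp0 : |p 0| < 1 / 2) (hq0 : |σ * q 0| < μ) {τ : ℝ} (hτ : 0 < τ)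
    (hpp : Function.Periodic p τ) (hqp : Function.Periodic q τ) :
    -log (1 - 2 * p 0) ≤ μ * τ := by
  have hbounds := hs.abs_lt_of_initial_abs_lt hσ.ne' hp0 hq0
  have hμ : 0 ≤ μ := (abs_nonneg _).trans hq0.le
  obtain ⟨t₀, ⟨ht₀, ht₀τ⟩, hpt₀⟩ :=
    hs.exists_mem_Ico_nonpos hσ (fun t => (hbounds t).2) hτ hpp hqp
  have hmono := hs.monotone_mul_sub_log (fun t => (hbounds t).1) (fun t => (hbounds t).2.le) ht₀
  have hlog : 0 ≤ log (1 - 2 * p t₀) := log_nonneg (by linarith)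
  simp only [mul_zero, zero_sub] at hmono
  nlinarith [mul_le_mul_of_nonneg_left ht₀τ.le hμ]

end IsNpsSolution

theorem period_function_limit_at_half (μ σ : ℝ) (hμ : 0 < μ) (hσ : 0 < σ)
    (Tp : ℝ → ℝ)
    (hTp : ∀ ζ ∈ Set.Ioo (0 : ℝ) (1 / 2), ∃ p q : ℝ → ℝ,
      IsNpsSolution μ σ p q ∧ p 0 = ζ ∧ q 0 = 0 ∧ IsMinimalPeriod p q (Tp ζ)) :
    Tendsto Tp (𝓝[<] ((1 : ℝ) / 2)) atTop := by
  have hbound : ∀ᶠ ζ in 𝓝[<] (1 / 2 : ℝ), -log (1 - 2 * ζ) / μ ≤ Tp ζ := by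
    filter_upwards [Ioo_mem_nhdsLT (by norm_num : (0 : ℝ) < 1 / 2)] with ζ hζ
    obtain ⟨p, q, hs, hp0, hq0, hτ, hper, -⟩ := hTp ζ hζ
    subst hp0
    rw [div_le_iff₀' hμ]
    exact hs.neg_log_one_sub_two_mul_le_mul_period hσ (abs_lt.2 ⟨by linarith [hζ.1], hζ.2⟩)
      (by simpa [hq0]) hτ (fun t => (hper t).1) (fun t => (hper t).2)
  exact tendsto_atTop_mono' _ hbound (tendsto_neg_log_one_sub_two_mul_nhdsLT.atTop_div_const hμ)
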